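/- arXiv:1212.1700 — 5 statements merged into one kernel-verified Lean document; each statement's English description precedes it below -/
import Mathlib

section
/- Let V be a real vector space and C ⊆ V a convex cone (closed under addition and under multiplication by nonnegative real scalars) possessing an algebraic interior point, i.e. a point c₀ ∈ C such that for every v ∈ V there is ε > 0 with c₀ + t • v ∈ C for all real t with |t| < ε. If v ∈ V \ C, then there exists a nonzero ℝ-linear functional φ : V → ℝ such that φ(v) ≤ φ(c) for all c ∈ C; in particular, φ(v) < φ(c) for every algebraic interior point c of C. -/
open Set

/-- For a nonzero real `a`, `Real.sign a * a > 0`. -/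
private lemma sign_mul_pos_of_ne_zero (a : ℝ) (ha : a ≠ 0) : 0 < Real.sign a * a := by
  rcases ha.lt_or_gt with h | h
  · rw [Real.sign_of_neg h]; nlinarith
  · rw [Real.sign_of_pos h]; nlinarith

private lemma abs_sign_le_one (a : ℝ) : |Real.sign a| ≤ 1 := by
  rcases Real.sign_apply_eq a with h | h | h <;> rw [h] <;> norm_num

/-- The Eidelheit–Kakutani separation theorem: if `C` is a convex cone in a real
vector space `V` possessing an algebraic interior point `c₀`, and `v ∉ C`, then some
nonzero linear functional `φ` satisfies `φ v ≤ φ c` for all `c ∈ C`, with strict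
inequality at every algebraic interior point of `C`. -/
theorem eidelheit_kakutani_separation
    {V : Type*} [AddCommGroup V] [Module ℝ V] (C : Set V)
    (hadd : ∀ x ∈ C, ∀ y ∈ C, x + y ∈ C)
    (hsmul : ∀ t : ℝ, 0 ≤ t → ∀ x ∈ C, t • x ∈ C)
    (c₀ : V) (hc₀ : c₀ ∈ C)
    (hc₀int : ∀ v : V, ∃ ε > (0 : ℝ), ∀ t : ℝ, |t| < ε → c₀ + t • v ∈ C)
    (v : V) (hv : v ∉ C) :
    ∃ φ : V →ₗ[ℝ] ℝ, φ ≠ 0 ∧ (∀ c ∈ C, φ v ≤ φ c) ∧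
      ∀ c ∈ C, (∀ w : V, ∃ ε > (0 : ℝ), ∀ t : ℝ, |t| < ε → c + t • w ∈ C) → φ v < φ c := by
  classical
  -- the translated set `K = C - c₀`
  set K : Set V := {x : V | x + c₀ ∈ C} with hK
  have hK0 : (0 : V) ∈ K := by simpa [hK] using hc₀
  have hKconv : Convex ℝ K := by
    intro x hx y hy a b ha hb hab
    have key : a • x + b • y + c₀ = a • (x + c₀) + b • (y + c₀) := by
      have hcc : c₀ = a • c₀ + b • c₀ := by rw [← add_smul, hab, one_smul]
      conv_lhs => rw [hcc]
      rw [smul_add, smul_add]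
      abel
    simp only [hK, mem_setOf_eq, key]
    exact hadd _ (hsmul a ha _ hx) _ (hsmul b hb _ hy)
  have hKabsx : ∀ x : V, Absorbs ℝ K {x} := by
    intro x
    obtain ⟨ε, hε, hx⟩ := hc₀int x
    refine absorbs_iff_norm.2 ⟨2 / ε, fun c hc => ?_⟩
    have h2ε : (0:ℝ) < 2 / ε := by positivity
    have hc0 : c ≠ 0 := by
      intro h
      rw [h, norm_zero] at hc
      linarith
    intro y hy
    rcases mem_singleton_iff.1 hy with rfl
    rw [mem_smul_set_iff_inv_smul_mem₀ hc0]
    have hcpos : (0:ℝ) < ‖c‖ := lt_of_lt_of_le h2ε hc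
    have hinv : |c⁻¹| < ε := by
      rw [abs_inv, ← Real.norm_eq_abs, inv_lt_comm₀ hcpos hε]
      calc ε⁻¹ < 2 / ε := by rw [div_eq_mul_inv]; nlinarith [inv_pos.2 hε]
        _ ≤ ‖c‖ := hc
    have := hx c⁻¹ hinv
    simpa [hK, add_comm] using this
  have hKabs : Absorbent ℝ K := hKabsx
  have hvc : v - c₀ ∉ K := by
    simp only [hK, mem_setOf_eq, sub_add_cancel]
    exact hv
  have hvc0 : v - c₀ ≠ 0 := by
    intro h
    exact hv (by rwa [sub_eq_zero.1 h])
  set y₀ : ℝ := gauge K (v - c₀) with hy₀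
  have hy₀1 : 1 ≤ y₀ :=
    one_le_gauge_of_notMem (hKconv.starConvex hK0) (hKabsx _) hvc
  -- the partial linear map on the span of `v - c₀`
  have Hf : ∀ c : ℝ, c • (v - c₀) = 0 → c • y₀ = 0 := by
    intro c hc
    have : c = 0 := by
      by_contra h
      exact hvc0 (by simpa [h] using congrArg (fun z => c⁻¹ • z) hc)
    simp [this]
  set f : V →ₗ.[ℝ] ℝ := LinearPMap.mkSpanSingleton' (v - c₀) y₀ Hf with hf
  have hdom : f.domain = Submodule.span ℝ {v - c₀} := rfl
  have hfle : ∀ x : f.domain, f x ≤ gauge K x := by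
    rintro ⟨x, hx⟩
    have hx' : x ∈ Submodule.span ℝ {v - c₀} := hx
    rw [Submodule.mem_span_singleton] at hx'
    obtain ⟨t, ht⟩ := hx'
    subst ht
    have happ : f ⟨t • (v - c₀), hx⟩ = t • y₀ :=
      LinearPMap.mkSpanSingleton'_apply (v - c₀) y₀ Hf t hx
    rw [happ]
    rcases le_or_gt 0 t with ht | ht
    · show t • y₀ ≤ gauge K (t • (v - c₀))
      rw [gauge_smul_of_nonneg ht]
    · refine le_trans ?_ (gauge_nonneg _)
      have : (0:ℝ) ≤ y₀ := le_trans zero_le_one hy₀1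
      simp only [smul_eq_mul]
      nlinarith
  obtain ⟨g, hgf, hgle⟩ := exists_extension_of_le_sublinear f (gauge K)
    (fun c hc x => by rw [gauge_smul_of_nonneg hc.le, smul_eq_mul]) (gauge_add_le hKconv hKabs)
    hfle
  have hgvc : g (v - c₀) = y₀ := by
    have hmem : v - c₀ ∈ f.domain := by
      rw [hdom]; exact Submodule.mem_span_singleton_self _
    have h1 := hgf ⟨v - c₀, hmem⟩
    have h2 : f ⟨v - c₀, hmem⟩ = y₀ :=
      LinearPMap.mkSpanSingleton'_apply_self (v - c₀) y₀ Hf hmem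
    rw [h1, h2]
  have hweakC : ∀ c ∈ C, (-g) v ≤ (-g) c := by
    intro c hc
    have h1 : g (c - c₀) ≤ 1 := le_trans (hgle _) (gauge_le_one_of_mem (by
      simpa [hK] using hc))
    have h2 : (1:ℝ) ≤ g (v - c₀) := hgvc ▸ hy₀1
    simp only [map_sub] at h1 h2
    simp only [LinearMap.neg_apply]
    linarith
  refine ⟨-g, ?_, hweakC, ?_⟩
  · intro h
    have h0 : (-g) (v - c₀) = 0 := by rw [h]; rfl
    rw [LinearMap.neg_apply, hgvc] at h0
    linarith
  · intro c hc hcint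
    rcases lt_or_eq_of_le (hweakC c hc) with h | h
    · exact h
    exfalso
    -- equality case: use the interior condition and nontriviality of g at `v - c₀`
    have hgceq : g v = g c := by
      simp only [LinearMap.neg_apply, neg_inj] at h
      exact h
    obtain ⟨ε, hε, hcw⟩ := hcint (v - c₀)
    have hgw : g (v - c₀) ≠ 0 := by rw [hgvc]; linarith
    set t : ℝ := (ε / 2) * Real.sign (g (v - c₀)) with ht
    have habs : |t| < ε := by
      rw [ht, abs_mul, abs_of_pos (by positivity : (0:ℝ) < ε / 2)]
      have := abs_sign_le_one (g (v - c₀))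
      nlinarith
    have hmem := hcw t habs
    have h3 : g (c + t • (v - c₀) - c₀) ≤ 1 := le_trans (hgle _) (gauge_le_one_of_mem (by
      simpa [hK] using hmem))
    have hexp : g (c + t • (v - c₀) - c₀) = g c + t * g (v - c₀) - g c₀ := by
      simp [map_add, map_sub, map_smul, smul_eq_mul]
    rw [hexp] at h3
    have h2' : g v - g c₀ ≥ 1 := by
      have h2 : (1:ℝ) ≤ g (v - c₀) := hgvc ▸ hy₀1
      simp only [map_sub] at h2
      linarith
    have hpos : 0 < t * g (v - c₀) := by
      rw [ht, mul_assoc]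
      have := sign_mul_pos_of_ne_zero (g (v - c₀)) hgw
      nlinarith
    rw [← hgceq] at h3
    linarith
end

section
/- Let A be a semi-pre-C*-algebra over ℂ, let W ⊆ A be a ℂ-linear subspace closed under the involution, and let v be a hermitian element of A that does not belong to the set {a + w : a ∈ A₊, w ∈ W, w* = w}. Then there exists a state φ on A such that φ(w) = 0 for all w ∈ W and φ(v) ≤ 0 (φ(v) is a real number at most 0). -/
/-- A *-positive cone making a unital complex *-algebra `A` into a
semi-pre-C*-algebra: `A₊ = P` consists of hermitian elements, contains the nonnegative
real multiples of `1`, is closed under nonnegative real scalar multiples and addition,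
is closed under conjugation `x* a x`, and satisfies the Combes (archimedean) axiom. -/
structure IsSemiPreCstarCone (A : Type*) [Ring A] [Algebra ℂ A] [StarRing A]
    (P : Set A) : Prop where
  herm : ∀ a ∈ P, star a = a
  smul_one_mem : ∀ t : ℝ, 0 ≤ t → ((t : ℂ) • (1 : A)) ∈ P
  smul_add_mem : ∀ l : ℝ, 0 ≤ l → ∀ a ∈ P, ∀ b ∈ P, (l : ℂ) • a + b ∈ P
  conj_mem : ∀ a ∈ P, ∀ x : A, star x * a * x ∈ P
  archimedean : ∀ x : A, ∃ R : ℝ, 0 < R ∧ (R : ℂ) • (1 : A) - star x * x ∈ P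

/-- A state on a semi-pre-C*-algebra `(A, P)`: a unital, self-adjoint linear
functional that takes nonnegative real values on the cone `P`. -/
structure IsStateOn {A : Type*} [Ring A] [Algebra ℂ A] [StarRing A]
    (P : Set A) (φ : A →ₗ[ℂ] ℂ) : Prop where
  map_one : φ 1 = 1
  map_star : ∀ x : A, φ (star x) = starRingEnd ℂ (φ x)
  pos : ∀ a ∈ P, ∃ r : ℝ, 0 ≤ r ∧ φ a = r

/-!
The functional `t • 1 ↦ t` on `ℝ • 1` is nonnegative on the pointed cone
`{x | x + x* ∈ A₊ + W_h - ℝ₊ v}`, where `W_h` is the hermitian part of `W`: if `t • 1` lay in it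
with `t < 0`, rescaling an archimedean bound `R • 1 + v ∈ A₊` would absorb `t • 1` and put `v`
into `A₊ + W_h`. The Combes axiom makes `1` an order unit, so the Riesz extension theorem gives a
real functional `g` with `g 1 = 1` that is nonnegative on `A₊`, vanishes on skew-hermitian
elements and on `W`, and has `g v ≤ 0`. The state is its complexification
`x ↦ g x - i g (i x)`, which needs `g (i h) = 0` for hermitian `h`. As the involution is not
assumed conjugate-linear, `star (i x) = -i s x*` only up to the central involution
`s = (i 1)* (i 1) ∈ A₊`; but both `1 - s` and `s - 1` are positive up to scale, so `g` kills the
ideal `(1 - s) A`, and that is enough.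
-/

namespace IsSemiPreCstarCone

variable {A : Type*} [Ring A] [Algebra ℂ A] [StarRing A] {P : Set A}

theorem real_smul_one_mem (hP : IsSemiPreCstarCone A P) {t : ℝ} (ht : 0 ≤ t) :
    t • (1 : A) ∈ P := by
  simpa only [Complex.coe_smul] using hP.smul_one_mem t ht

theorem zero_mem (hP : IsSemiPreCstarCone A P) : (0 : A) ∈ P := by
  simpa using hP.real_smul_one_mem le_rfl

theorem one_mem (hP : IsSemiPreCstarCone A P) : (1 : A) ∈ P := by
  simpa using hP.real_smul_one_mem zero_le_one

theorem add_mem (hP : IsSemiPreCstarCone A P) {a b : A} (ha : a ∈ P) (hb : b ∈ P) :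
    a + b ∈ P := by
  simpa using hP.smul_add_mem 1 zero_le_one a ha b hb

theorem smul_mem (hP : IsSemiPreCstarCone A P) {r : ℝ} (hr : 0 ≤ r) {a : A} (ha : a ∈ P) :
    r • a ∈ P := by
  simpa [Complex.coe_smul] using hP.smul_add_mem r hr a ha 0 hP.zero_mem

theorem star_mul_self_mem (hP : IsSemiPreCstarCone A P) (x : A) : star x * x ∈ P := by
  simpa using hP.conj_mem 1 hP.one_mem x

theorem star_real_smul (hP : IsSemiPreCstarCone A P) (r : ℝ) (x : A) :
    star (r • x) = r • star x := by
  have star_smul_one : ∀ t : ℝ, star (t • (1 : A)) = t • 1 := by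
    intro t
    rcases le_total 0 t with ht | ht
    · exact hP.herm _ (hP.real_smul_one_mem ht)
    · simpa using hP.herm _ (hP.real_smul_one_mem (neg_nonneg.2 ht))
  calc star (r • x) = star ((r • (1 : A)) * x) := by rw [smul_one_mul]
    _ = r • star x := by rw [star_mul, star_smul_one, mul_smul_one]

theorem exists_smul_one_sub_mem (hP : IsSemiPreCstarCone A P) {h : A} (hh : star h = h) :
    ∃ R : ℝ, 0 < R ∧ R • (1 : A) - h ∈ P := by
  obtain ⟨R, hR, hmem⟩ := hP.archimedean (1 + h)
  refine ⟨R / 4, by positivity, ?_⟩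
  -- `4 (R/4 - h) = (R - (1 + h)²) + (1 - h)²`
  have hsq := hP.star_mul_self_mem (1 - h)
  have key : (R / 4) • (1 : A) - h =
      (1 / 4 : ℝ) • (((R : ℂ) • (1 : A) - star (1 + h) * (1 + h)) + star (1 - h) * (1 - h)) := by
    simp only [star_add, star_sub, star_one, hh, mul_add, add_mul, mul_sub, sub_mul, mul_one,
      one_mul, Complex.coe_smul]
    module
  rw [key]
  exact hP.smul_mem (by norm_num) (hP.add_mem hmem hsq)

end IsSemiPreCstarCone

section StarSign

variable {A : Type*} [Ring A] [Algebra ℂ A]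

theorem algebraMap_I_mul_self : algebraMap ℂ A Complex.I * algebraMap ℂ A Complex.I = -1 := by
  rw [← map_mul, Complex.I_mul_I, map_neg, map_one]

variable (A) [StarRing A]

/-- `star` is not assumed conjugate-linear, so `star (I • 1)` need not be `-I • 1`; this
central involution equals `1` exactly when it is. -/
def starSign : A := star (algebraMap ℂ A Complex.I) * algebraMap ℂ A Complex.I

variable {A}

theorem commute_star_algebraMap (z : ℂ) (x : A) : Commute (star (algebraMap ℂ A z)) x := by
  simpa using (Algebra.commute_algebraMap_left z (star x)).star_star

theorem commute_starSign (x : A) : Commute (starSign A) x :=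
  (commute_star_algebraMap _ x).mul_left (Algebra.commute_algebraMap_left _ x)

theorem starSign_mul_self : starSign A * starSign A = 1 := by
  set j := algebraMap ℂ A Complex.I
  calc starSign A * starSign A = star (j * j) * (j * j) := by
        rw [starSign, (Algebra.commute_algebraMap_left _ (star j)).mul_mul_mul_comm, star_mul]
    _ = 1 := by rw [algebraMap_I_mul_self, star_neg, star_one, neg_mul_neg, one_mul]

theorem star_I_smul (x : A) : star (Complex.I • x) = -(Complex.I • (starSign A * star x)) := by
  set j := algebraMap ℂ A Complex.I
  rw [Algebra.smul_def, Algebra.smul_def, star_mul, starSign, ← mul_assoc, ← mul_assoc,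
    (Algebra.commute_algebraMap_left _ (star j)).eq, mul_assoc (star j), algebraMap_I_mul_self,
    mul_neg_one, neg_mul, neg_neg, (commute_star_algebraMap _ _).eq]

theorem commute_one_sub_starSign (x : A) : Commute (1 - starSign A) x :=
  (Commute.one_left x).sub_left (commute_starSign x)

theorem one_sub_starSign_mul_self :
    (1 - starSign A) * (1 - starSign A) = (2 : ℝ) • (1 - starSign A) := by
  rw [mul_sub, mul_one, sub_mul, one_mul, starSign_mul_self, two_smul]
  abel

theorem IsSemiPreCstarCone.starSign_mem {P : Set A} (hP : IsSemiPreCstarCone A P) :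
    starSign A ∈ P :=
  hP.star_mul_self_mem _

theorem IsSemiPreCstarCone.star_one_sub_starSign {P : Set A} (hP : IsSemiPreCstarCone A P) :
    star (1 - starSign A) = 1 - starSign A := by
  rw [star_sub, star_one, hP.herm _ hP.starSign_mem]

end StarSign

section RealFunctional

variable {A : Type*} [Ring A] [Algebra ℂ A] [StarRing A] {P : Set A} {g : A →ₗ[ℝ] ℝ}

theorem map_star_of_map_skew (hgskew : ∀ k : A, star k = -k → g k = 0) (x : A) :
    g (star x) = g x := by
  have := hgskew (star x - x) (by rw [star_sub, star_star, neg_sub])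
  rwa [map_sub, sub_eq_zero] at this

theorem map_one_sub_starSign (hP : IsSemiPreCstarCone A P) (hgP : ∀ a ∈ P, 0 ≤ g a) :
    g (1 - starSign A) = 0 := by
  set f := 1 - starSign A
  have hf : star f = f := hP.star_one_sub_starSign
  have hIf : star (Complex.I • f) = Complex.I • f := by
    rw [star_I_smul, hf, mul_sub, mul_one, starSign_mul_self, ← neg_sub, smul_neg, neg_neg]
  have h₁ := hgP _ (hP.star_mul_self_mem f)
  have h₂ := hgP _ (hP.star_mul_self_mem (Complex.I • f))
  rw [hf, one_sub_starSign_mul_self, map_smul, smul_eq_mul] at h₁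
  rw [hIf, smul_mul_smul_comm, Complex.I_mul_I, neg_one_smul, one_sub_starSign_mul_self,
    map_neg, map_smul, smul_eq_mul] at h₂
  linarith

theorem map_one_sub_starSign_mul_le (hP : IsSemiPreCstarCone A P) (hgP : ∀ a ∈ P, 0 ≤ g a)
    {y : A} (hy : star y = y) : g ((1 - starSign A) * y) ≤ 0 := by
  set f := 1 - starSign A
  have hf : star f = f := hP.star_one_sub_starSign
  have hfy : y * f = f * y := (commute_one_sub_starSign y).eq.symm
  have hff : f * f = (2 : ℝ) • f := one_sub_starSign_mul_self
  have hgf : g f = 0 := map_one_sub_starSign hP hgP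
  clear_value f
  obtain ⟨R, -, hR⟩ := hP.exists_smul_one_sub_mem hy
  have hconj : star f * (R • 1 - y) * f = (2 * R) • f - (2 : ℝ) • (f * y) := by
    rw [hf, mul_sub, sub_mul, mul_smul_one, smul_mul_assoc, mul_assoc, hfy, ← mul_assoc, hff,
      smul_smul, smul_mul_assoc, mul_comm R]
  have := hgP _ (hP.conj_mem _ hR f)
  rw [hconj, map_sub, map_smul, map_smul, hgf, smul_eq_mul, smul_eq_mul] at this
  linarith

theorem map_one_sub_starSign_mul (hP : IsSemiPreCstarCone A P) (hgP : ∀ a ∈ P, 0 ≤ g a)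
    (hgskew : ∀ k : A, star k = -k → g k = 0) (x : A) : g ((1 - starSign A) * x) = 0 := by
  set f := 1 - starSign A
  have hf : star f = f := hP.star_one_sub_starSign
  have hherm : star (x + star x) = x + star x := by rw [star_add, star_star, add_comm]
  have hle := map_one_sub_starSign_mul_le hP hgP hherm
  have hge := map_one_sub_starSign_mul_le hP hgP (y := -(x + star x)) (by rw [star_neg, hherm])
  have hstar : g (f * star x) = g (f * x) := by
    rw [← map_star_of_map_skew hgskew (f * x), star_mul, hf, (commute_one_sub_starSign _).eq]
  rw [mul_neg, map_neg, mul_add, map_add, hstar] at hge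
  rw [mul_add, map_add, hstar] at hle
  linarith

theorem map_I_smul_of_star_eq (hP : IsSemiPreCstarCone A P) (hgP : ∀ a ∈ P, 0 ≤ g a)
    (hgskew : ∀ k : A, star k = -k → g k = 0) {h : A} (hh : star h = h) :
    g (Complex.I • h) = 0 := by
  have hstar := map_star_of_map_skew hgskew (Complex.I • h)
  have hnull := map_one_sub_starSign_mul hP hgP hgskew (Complex.I • h)
  rw [star_I_smul, hh, map_neg] at hstar
  rw [mul_smul_comm, sub_mul, one_mul, smul_sub, map_sub] at hnull
  linarith

end RealFunctional

section State

variable {A : Type*} [Ring A] [Algebra ℂ A] [StarRing A] {P : Set A} {g : A →ₗ[ℝ] ℝ}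

theorem extendRCLike_apply_of_star_eq (hP : IsSemiPreCstarCone A P) (hgP : ∀ a ∈ P, 0 ≤ g a)
    (hgskew : ∀ k : A, star k = -k → g k = 0) {h : A} (hh : star h = h) :
    Module.Dual.extendRCLike (𝕜 := ℂ) g h = g h := by
  simp [Module.Dual.extendRCLike_apply, map_I_smul_of_star_eq hP hgP hgskew hh]

theorem isStateOn_extendRCLike (hP : IsSemiPreCstarCone A P) (hg1 : g 1 = 1)
    (hgP : ∀ a ∈ P, 0 ≤ g a) (hgskew : ∀ k : A, star k = -k → g k = 0) :
    IsStateOn P (Module.Dual.extendRCLike (𝕜 := ℂ) g) where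
  map_one := by rw [extendRCLike_apply_of_star_eq hP hgP hgskew (star_one A), hg1,
    Complex.ofReal_one]
  map_star x := by
    have hI := map_I_smul_of_star_eq hP hgP hgskew (h := x + star x)
      (by rw [star_add, star_star, add_comm])
    rw [smul_add, map_add, add_eq_zero_iff_eq_neg'] at hI
    simp [Module.Dual.extendRCLike_apply, map_star_of_map_skew hgskew, hI]
  pos a ha := ⟨g a, hgP a ha, extendRCLike_apply_of_star_eq hP hgP hgskew (hP.herm a ha)⟩

end State

namespace IsSemiPreCstarCone

variable {A : Type*} [Ring A] [Algebra ℂ A] [StarRing A] {P : Set A}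

def addStar (hP : IsSemiPreCstarCone A P) : A →ₗ[ℝ] A where
  toFun x := x + star x
  map_add' x y := by rw [star_add]; abel
  map_smul' r x := by rw [hP.star_real_smul, RingHom.id_apply, smul_add]

@[simp]
theorem addStar_apply (hP : IsSemiPreCstarCone A P) (x : A) : hP.addStar x = x + star x := rfl

def separationCone (hP : IsSemiPreCstarCone A P) (W : Submodule ℂ A) (v : A) :
    PointedCone ℝ A where
  carrier := {x | ∃ a ∈ P, ∃ w ∈ W, star w = w ∧ ∃ β : ℝ, 0 ≤ β ∧ x = a + w - β • v}
  zero_mem' := ⟨0, hP.zero_mem, 0, W.zero_mem, star_zero _, 0, le_rfl, by simp⟩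
  add_mem' := by
    rintro _ _ ⟨a, ha, w, hw, hws, β, hβ, rfl⟩ ⟨b, hb, u, hu, hus, γ, hγ, rfl⟩
    refine ⟨a + b, hP.add_mem ha hb, w + u, W.add_mem hw hu, by rw [star_add, hws, hus],
      β + γ, add_nonneg hβ hγ, by module⟩
  smul_mem' := by
    rintro ⟨c, hc⟩ _ ⟨a, ha, w, hw, hws, β, hβ, rfl⟩
    refine ⟨c • a, hP.smul_mem hc ha, c • w, W.smul_of_tower_mem c hw,
      by rw [hP.star_real_smul, hws], c * β, mul_nonneg hc hβ, ?_⟩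
    show c • (a + w - β • v) = _
    module


variable {W : Submodule ℂ A} {v : A}

theorem nonneg_of_smul_one_mem_separationCone (hP : IsSemiPreCstarCone A P) (hv : star v = v)
    (hsep : ¬ ∃ a ∈ P, ∃ w ∈ W, star w = w ∧ v = a + w) {t : ℝ}
    (ht : t • (1 : A) ∈ hP.separationCone W v) : 0 ≤ t := by
  by_contra! htneg
  obtain ⟨a, ha, w, hw, hws, β, hβ, heq⟩ := ht
  obtain ⟨R, hR, hRv⟩ := hP.exists_smul_one_sub_mem (h := -v) (by rw [star_neg, hv])
  rw [sub_neg_eq_add] at hRv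
  set lam := -t / R
  have hlam : 0 < lam := div_pos (neg_pos.2 htneg) hR
  have hlamR : lam * R = -t := div_mul_cancel₀ _ hR.ne'
  set c := (β + lam)⁻¹
  have hc : 0 < c := inv_pos.2 (by positivity)
  have hsum : a + lam • (R • 1 + v) + w = (β + lam) • v := by
    linear_combination (norm := module) -heq + hlamR • (1 : A)
  refine hsep ⟨c • (a + lam • (R • 1 + v)),
    hP.smul_mem hc.le (hP.add_mem ha (hP.smul_mem hlam.le hRv)), c • w,
    W.smul_of_tower_mem c hw, by rw [hP.star_real_smul, hws], ?_⟩
  rw [← smul_add, hsum, smul_smul, inv_mul_cancel₀ (by positivity), one_smul]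

theorem exists_dual_nonneg_on_separationCone (hP : IsSemiPreCstarCone A P) (hv : star v = v)
    (hsep : ¬ ∃ a ∈ P, ∃ w ∈ W, star w = w ∧ v = a + w) :
    ∃ g : A →ₗ[ℝ] ℝ, g 1 = 1 ∧ ∀ x, x + star x ∈ hP.separationCone W v → 0 ≤ g x := by
  have h1 : (1 : A) ≠ 0 := by
    intro h10
    have : Subsingleton A := subsingleton_of_zero_eq_one h10.symm
    exact hsep ⟨0, hP.zero_mem, 0, W.zero_mem, star_zero _, Subsingleton.elim _ _⟩
  have hnonneg : ∀ t : ℝ, hP.addStar (t • 1) ∈ hP.separationCone W v → 0 ≤ t := by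
    intro t ht
    rw [addStar_apply, hP.star_real_smul, star_one, ← two_smul ℝ, smul_smul] at ht
    linarith [nonneg_of_smul_one_mem_separationCone hP hv hsep ht]
  have hdense : ∀ y, ∃ t : ℝ, hP.addStar (t • 1 + y) ∈ hP.separationCone W v := by
    intro y
    obtain ⟨R, -, hR⟩ := hP.exists_smul_one_sub_mem (h := -(y + star y))
      (by rw [star_neg, star_add, star_star, add_comm])
    refine ⟨R / 2, _, hR, 0, W.zero_mem, star_zero _, 0, le_rfl, ?_⟩
    rw [addStar_apply, star_add, hP.star_real_smul, star_one]
    module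
  obtain ⟨g, hgf, hgK⟩ := riesz_extension ((hP.separationCone W v).comap hP.addStar)
    (LinearPMap.mkSpanSingleton (1 : A) (1 : ℝ) h1)
    (by
      rintro ⟨_, hx⟩ hxK
      obtain ⟨t, rfl⟩ := Submodule.mem_span_singleton.1 hx
      rw [LinearPMap.mkSpanSingleton'_apply, smul_eq_mul, mul_one]
      exact hnonneg t (PointedCone.mem_comap.1 hxK))
    (fun y => (hdense y).elim fun t ht =>
      ⟨⟨t • 1, Submodule.mem_span_singleton.2 ⟨t, rfl⟩⟩, PointedCone.mem_comap.2 ht⟩)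
  refine ⟨g, ?_, fun x hx => hgK x (PointedCone.mem_comap.2 hx)⟩
  have := hgf ⟨1, Submodule.mem_span_singleton_self 1⟩
  rwa [LinearPMap.mkSpanSingleton_apply] at this


variable {g : A →ₗ[ℝ] ℝ}

theorem map_nonneg_of_mem (hP : IsSemiPreCstarCone A P)
    (hg : ∀ x, x + star x ∈ hP.separationCone W v → 0 ≤ g x) {a : A} (ha : a ∈ P) : 0 ≤ g a :=
  hg a ⟨a + a, hP.add_mem ha ha, 0, W.zero_mem, star_zero _, 0, le_rfl, by
    rw [hP.herm a ha, zero_smul, add_zero, sub_zero]⟩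

theorem map_eq_zero_of_star_eq_neg (hP : IsSemiPreCstarCone A P)
    (hg : ∀ x, x + star x ∈ hP.separationCone W v → 0 ≤ g x) {k : A} (hk : star k = -k) :
    g k = 0 := by
  have h₁ := hg k (by rw [hk, add_neg_cancel]; exact Submodule.zero_mem _)
  have h₂ := hg (-k) (by rw [star_neg, hk, neg_neg, neg_add_cancel]; exact Submodule.zero_mem _)
  rw [map_neg] at h₂
  linarith

theorem map_eq_zero_of_mem (hP : IsSemiPreCstarCone A P) (hW : ∀ w ∈ W, star w ∈ W)
    (hg : ∀ x, x + star x ∈ hP.separationCone W v → 0 ≤ g x) {w : A} (hw : w ∈ W) :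
    g w = 0 := by
  set h := w + star w
  have hh : star h = h := by rw [star_add, star_star, add_comm]
  have hhW : h ∈ W := W.add_mem hw (hW w hw)
  have h₁ := hg h ⟨0, hP.zero_mem, h + h, W.add_mem hhW hhW, by rw [star_add, hh], 0, le_rfl,
    by rw [hh, zero_add, zero_smul, sub_zero]⟩
  have h₂ := hg (-h) ⟨0, hP.zero_mem, -(h + h), W.neg_mem (W.add_mem hhW hhW),
    by rw [star_neg, star_add, hh], 0, le_rfl,
    by rw [star_neg, hh, zero_add, zero_smul, sub_zero]; abel⟩
  have hstar := map_star_of_map_skew (fun k hk => hP.map_eq_zero_of_star_eq_neg hg hk) w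
  rw [map_neg] at h₂
  rw [map_add] at h₁ h₂
  linarith

theorem map_nonpos (hP : IsSemiPreCstarCone A P) (hv : star v = v)
    (hg : ∀ x, x + star x ∈ hP.separationCone W v → 0 ≤ g x) : g v ≤ 0 := by
  have := hg (-v) ⟨0, hP.zero_mem, 0, W.zero_mem, star_zero _, 2, zero_le_two, by
    rw [star_neg, hv, two_smul]; abel⟩
  rw [map_neg] at this
  linarith

end IsSemiPreCstarCone

/-- If `W` is a *-subspace of a semi-pre-C*-algebra `A` and `v` is a hermitian element
not of the form `a + w` with `a ∈ A₊` and `w ∈ W` hermitian, then there is a state `φ`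
on `A` vanishing on `W` with `φ v ≤ 0` (a real number at most `0`). -/
theorem state_separation_from_cone_plus_subspace
    {A : Type*} [Ring A] [Algebra ℂ A] [StarRing A] (P : Set A)
    (hP : IsSemiPreCstarCone A P)
    (W : Submodule ℂ A) (hW : ∀ w ∈ W, star w ∈ W)
    (v : A) (hv : star v = v)
    (hsep : ¬ ∃ a ∈ P, ∃ w ∈ W, star w = w ∧ v = a + w) :
    ∃ φ : A →ₗ[ℂ] ℂ, IsStateOn P φ ∧ (∀ w ∈ W, φ w = 0) ∧
      ∃ r : ℝ, r ≤ 0 ∧ φ v = r := by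
  obtain ⟨g, hg1, hg⟩ := hP.exists_dual_nonneg_on_separationCone hv hsep
  have hgP : ∀ a ∈ P, 0 ≤ g a := fun a => hP.map_nonneg_of_mem hg
  have hgskew : ∀ k : A, star k = -k → g k = 0 := fun k => hP.map_eq_zero_of_star_eq_neg hg
  refine ⟨Module.Dual.extendRCLike g, isStateOn_extendRCLike hP hg1 hgP hgskew,
    fun w hw => ?_, g v, hP.map_nonpos hv hg, extendRCLike_apply_of_star_eq hP hgP hgskew hv⟩
  rw [Module.Dual.extendRCLike_apply, hP.map_eq_zero_of_mem hW hg hw,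
    hP.map_eq_zero_of_mem hW hg (W.smul_mem _ hw)]
  simp
end

section
/- Let A be a unital C*-algebra, H a complex Hilbert space, and φ : A → B(H) a unital ℂ-linear map which is completely positive, i.e. Σ_{i,j=1}^n ⟨φ(x_i* x_j) ξ_j, ξ_i⟩ ≥ 0 for every n ∈ ℕ, all x₁,…,xₙ ∈ A and all ξ₁,…,ξₙ ∈ H. Then for all x, y ∈ A: (a) φ(x*x) − φ(x)*φ(x) is a positive operator (the Kadison–Choi–Schwarz inequality); and (b) ‖φ(y*x) − φ(y)*φ(x)‖ ≤ ‖φ(y*y) − φ(y)*φ(y)‖^{1/2} · ‖φ(x*x) − φ(x)*φ(x)‖^{1/2}. -/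
/-!
Both parts are statements about the operator-valued kernel
`D(a, b) = φ(a⋆b) - φ(a)⋆φ(b)`. Complete positivity of `φ` says that `(a, b) ↦ φ(a⋆b)` is a
positive semidefinite kernel. Over `ℂ` its Gram matrices are then Hermitian, so `φ(a⋆) = φ(a)⋆`,
and feeding the kernel the tuple `(1, x₁, …, xₙ)` with the vectors
`(-∑ φ(xⱼ)ξⱼ, ξ₁, …, ξₙ)` shows that `D` is positive semidefinite as well. A positive
semidefinite kernel has positive diagonal operators, which is (a), and its `2 × 2` Gram matrices
have nonnegative determinant, a Cauchy–Schwarz inequality that gives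
`‖D(a, b)‖ ≤ ‖D(a, a)‖^{1/2} ‖D(b, b)‖^{1/2}`, which is (b).
-/

open scoped ComplexOrder InnerProductSpace Matrix

theorem Matrix.posSemidef_of_forall_dotProduct_mulVec_nonneg {n : Type*} [Fintype n]
    [DecidableEq n] {M : Matrix n n ℂ} (h : ∀ x, 0 ≤ star x ⬝ᵥ (M *ᵥ x)) : M.PosSemidef := by
  rw [← Matrix.isPositive_toEuclideanLin_iff, LinearMap.isPositive_iff_complex]
  intro x
  obtain ⟨hre, him⟩ := Complex.nonneg_iff.mp (h x.ofLp)
  have hinner : ⟪M.toEuclideanLin x, x⟫_ℂ = star (star x.ofLp ⬝ᵥ (M *ᵥ x.ofLp)) := by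
    rw [EuclideanSpace.inner_eq_star_dotProduct, Matrix.dotProduct_star]
    simp [dotProduct_comm]
  rw [hinner]
  exact ⟨Complex.ext (by simp) (by simp [← him]), by simpa using hre⟩

section Kernel

variable {α H : Type*} [NormedAddCommGroup H] [InnerProductSpace ℂ H]

def IsPosSemidefKernel (K : α → α → H →L[ℂ] H) : Prop :=
  ∀ (n : ℕ) (x : Fin n → α) (ξ : Fin n → H), 0 ≤ ∑ i, ∑ j, ⟪ξ i, K (x i) (x j) (ξ j)⟫_ℂ

namespace IsPosSemidefKernel

variable {K : α → α → H →L[ℂ] H}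

theorem posSemidef_gram (hK : IsPosSemidefKernel K) {n : ℕ} (x : Fin n → α) (ξ : Fin n → H) :
    (Matrix.of fun i j ↦ ⟪ξ i, K (x i) (x j) (ξ j)⟫_ℂ).PosSemidef := by
  refine Matrix.posSemidef_of_forall_dotProduct_mulVec_nonneg fun c ↦ ?_
  convert hK n x (c • ξ) using 1
  simp only [dotProduct, Matrix.mulVec, Matrix.of_apply, Pi.star_apply, Finset.mul_sum,
    Pi.smul_apply', map_smul, inner_smul_left, inner_smul_right, RCLike.star_def]
  exact Finset.sum_congr rfl fun i _ ↦ Finset.sum_congr rfl fun j _ ↦ by ring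

theorem inner_apply_nonneg (hK : IsPosSemidefKernel K) (a : α) (ζ : H) : 0 ≤ ⟪ζ, K a a ζ⟫_ℂ := by
  simpa using hK 1 ![a] ![ζ]

theorem star_apply [CompleteSpace H] (hK : IsPosSemidefKernel K) (a b : α) :
    star (K a b) = K b a := by
  ext η
  refine ext_inner_left ℂ fun ζ ↦ ?_
  have h := (hK.posSemidef_gram ![b, a] ![ζ, η]).isHermitian.apply 0 1
  simp only [Matrix.of_apply, Matrix.cons_val_zero, Matrix.cons_val_one] at h
  rw [ContinuousLinearMap.star_eq_adjoint, ContinuousLinearMap.adjoint_inner_right, ← h]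
  exact (inner_conj_symm _ _).symm

theorem isPositive_apply_self [CompleteSpace H] (hK : IsPosSemidefKernel K) (a : α) :
    (K a a).IsPositive := by
  have hsa : IsSelfAdjoint (K a a) := hK.star_apply a a
  refine (ContinuousLinearMap.isPositive_iff' _).mpr ⟨hsa, fun ζ ↦ ?_⟩
  exact (hsa.isSymmetric ζ ζ).symm ▸ hK.inner_apply_nonneg a ζ

theorem norm_inner_apply_sq_le (hK : IsPosSemidefKernel K) (a b : α) (ζ η : H) :
    ‖⟪ζ, K a b η⟫_ℂ‖ ^ 2 ≤ ‖⟪ζ, K a a ζ⟫_ℂ‖ * ‖⟪η, K b b η⟫_ℂ‖ := by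
  have hgram := hK.posSemidef_gram ![a, b] ![ζ, η]
  have hdet := hgram.det_nonneg
  have hherm := hgram.isHermitian.apply 1 0
  simp only [Matrix.det_fin_two, Matrix.of_apply, Matrix.cons_val_zero, Matrix.cons_val_one]
    at hdet hherm
  rw [← hherm, RCLike.star_def, Complex.mul_conj', sub_nonneg] at hdet
  rw [← norm_mul]
  simpa using CStarAlgebra.norm_le_norm_of_nonneg_of_le (by positivity) hdet

theorem norm_apply_le (hK : IsPosSemidefKernel K) (a b : α) : ‖K a b‖ ≤ √‖K a a‖ * √‖K b b‖ := by
  have hdiag (c : α) (v : H) (hv : ‖v‖ = 1) : ‖⟪v, K c c v⟫_ℂ‖ ≤ ‖K c c‖ := by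
    simpa [hv] using norm_inner_le_norm v (K c c v) |>.trans
      (mul_le_mul_of_nonneg_left ((K c c).le_opNorm v) (norm_nonneg v))
  refine ContinuousLinearMap.opNorm_le_of_re_inner_le (by positivity) fun η ζ hη hζ ↦ ?_
  calc RCLike.re ⟪K a b η, ζ⟫_ℂ ≤ ‖⟪ζ, K a b η⟫_ℂ‖ :=
        (RCLike.re_le_norm _).trans (norm_inner_symm _ _).le
    _ = √(‖⟪ζ, K a b η⟫_ℂ‖ ^ 2) := (Real.sqrt_sq (norm_nonneg _)).symm
    _ ≤ √(‖⟪ζ, K a a ζ⟫_ℂ‖ * ‖⟪η, K b b η⟫_ℂ‖) :=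
        Real.sqrt_le_sqrt (hK.norm_inner_apply_sq_le a b ζ η)
    _ ≤ √(‖K a a‖ * ‖K b b‖) := by gcongr <;> exact hdiag _ _ ‹_›
    _ = √‖K a a‖ * √‖K b b‖ := Real.sqrt_mul (norm_nonneg _) _

theorem sub_star_mul {A : Type*} [Monoid A] [StarMul A] [CompleteSpace H]
    {φ : A → H →L[ℂ] H} (hφ : IsPosSemidefKernel fun a b ↦ φ (star a * b)) (h1 : φ 1 = 1) :
    IsPosSemidefKernel fun a b ↦ φ (star a * b) - star (φ a) * φ b := by
  have hstar (a : A) : φ (star a) = star (φ a) := by simpa using (hφ.star_apply 1 a).symm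
  intro n x ξ
  set v := ∑ j, φ (x j) (ξ j)
  have hsum_adjoint (w : H) : ∑ i, ⟪ξ i, star (φ (x i)) w⟫_ℂ = ⟪v, w⟫_ℂ := by
    simp only [v, sum_inner, ContinuousLinearMap.star_eq_adjoint,
      ContinuousLinearMap.adjoint_inner_right]
  have hsum_product : ∑ i, ∑ j, ⟪ξ i, (star (φ (x i)) * φ (x j)) (ξ j)⟫_ℂ = ⟪v, v⟫_ℂ := by
    simp only [← hsum_adjoint v, v, map_sum, inner_sum, mul_apply_eq_comp]
  have hsum_right : ∑ j, ⟪v, φ (x j) (ξ j)⟫_ℂ = ⟪v, v⟫_ℂ := (inner_sum _ _ _).symm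
  have hpos := hφ (n + 1) (Fin.cons 1 x) (Fin.cons (-v) ξ)
  simp only [Fin.sum_univ_succ, Fin.cons_zero, Fin.cons_succ, star_one, one_mul, mul_one, h1,
    hstar, one_apply_eq_self, Finset.sum_add_distrib, hsum_adjoint, inner_neg_left,
    inner_neg_right, neg_neg, Finset.sum_neg_distrib, hsum_right] at hpos
  simp only [sub_apply, inner_sub_right, Finset.sum_sub_distrib, hsum_product]
  linear_combination hpos

end IsPosSemidefKernel

end Kernel

/-- The Kadison–Choi–Schwarz inequality and its refinement for unital completely
positive maps `φ : A → B(H)` on a unital C*-algebra: `φ(x*x) ≥ φ(x)*φ(x)`, and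
`‖φ(y*x) − φ(y)*φ(x)‖ ≤ ‖φ(y*y) − φ(y)*φ(y)‖^{1/2} ‖φ(x*x) − φ(x)*φ(x)‖^{1/2}`. -/
theorem kadison_choi_schwarz
    {A : Type*} [CStarAlgebra A]
    {H : Type*} [NormedAddCommGroup H] [InnerProductSpace ℂ H] [CompleteSpace H]
    (φ : A →ₗ[ℂ] (H →L[ℂ] H)) (hunital : φ 1 = 1)
    (hcp : ∀ (n : ℕ) (x : Fin n → A) (ξ : Fin n → H),
        0 ≤ ∑ i, ∑ j, (inner ℂ (ξ i) (φ (star (x i) * x j) (ξ j)) : ℂ))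
    (x y : A) :
    (φ (star x * x) - star (φ x) * φ x).IsPositive ∧
    ‖φ (star y * x) - star (φ y) * φ x‖ ≤
      Real.sqrt ‖φ (star y * y) - star (φ y) * φ y‖ *
        Real.sqrt ‖φ (star x * x) - star (φ x) * φ x‖ := by
  have hdefect := IsPosSemidefKernel.sub_star_mul hcp hunital
  exact ⟨hdefect.isPositive_apply_self x, hdefect.norm_apply_le y x⟩
end

section
/- Let A be a unital C*-algebra, H a complex Hilbert space, and φ : A → B(H) a unital completely positive map. Then the multiplicative domain md(φ) = {x ∈ A : φ(x*x) = φ(x)*φ(x) and φ(xx*) = φ(x)φ(x)*} is a unital *-subalgebra of A (it contains 1, and is closed under addition, scalar multiplication, multiplication, and the adjoint), and φ restricted to md(φ) is multiplicative: φ(xy) = φ(x)φ(y) for all x, y ∈ md(φ). -/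
open scoped ComplexOrder

/-- The multiplicative domain of a map `φ : A → B(H)`:
`{x : φ(x*x) = φ(x)*φ(x) and φ(xx*) = φ(x)φ(x)*}`. -/
def multiplicativeDomain {A : Type*} [CStarAlgebra A]
    {H : Type*} [NormedAddCommGroup H] [InnerProductSpace ℂ H] [CompleteSpace H]
    (φ : A →ₗ[ℂ] (H →L[ℂ] H)) : Set A :=
  {x : A | φ (star x * x) = star (φ x) * φ x ∧ φ (x * star x) = φ x * star (φ x)}

/-! Complete positivity at the triple `(1, a, b)` with the vectors `(-(φ a ξ + φ b η), ξ, η)` gives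
the Schwarz inequality `‖φ a ξ + φ b η‖² ≤ Σ ⟪ξᵢ, φ (xᵢ* xⱼ) ξⱼ⟫` for `x = (a, b)`, `ξ = (ξ, η)`.
If `φ (a* a) = φ a* φ a`, put `ξ = t • v` with `v = (φ (a* b) - φ a* φ b) η` and `t` real: the
inequality becomes `0 ≤ 2 t ‖v‖² + c` for all `t`, forcing `v = 0`, so `φ (a* b) = φ a* φ b`.
Since `φ` commutes with `star` (positivity plus polarization), the multiplicative domain is
exactly the set of `x` with `φ (x b) = φ x φ b` and `φ (b x) = φ b φ x` for all `b`, and this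
description is visibly closed under the algebra operations. -/

open scoped InnerProductSpace ComplexStarModule ComplexConjugate

theorem eq_zero_of_forall_nonneg_mul_add {𝕜 : Type*} [Field 𝕜] [LinearOrder 𝕜]
    [IsStrictOrderedRing 𝕜] {r c : 𝕜} (h : ∀ t, 0 ≤ t * r + c) : r = 0 := by
  by_contra hr
  have := h (-(c + 1) / r)
  rw [div_mul_cancel₀ _ hr] at this
  linarith

section CompletelyPositive

variable {A : Type*} [Ring A] [StarRing A] [Module ℂ A]
  {H : Type*} [NormedAddCommGroup H] [InnerProductSpace ℂ H]

def IsCompletelyPositive (φ : A →ₗ[ℂ] (H →L[ℂ] H)) : Prop :=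
  ∀ (n : ℕ) (x : Fin n → A) (ξ : Fin n → H),
    0 ≤ ∑ i, ∑ j, ⟪ξ i, φ (star (x i) * x j) (ξ j)⟫_ℂ

namespace IsCompletelyPositive

variable {φ : A →ₗ[ℂ] (H →L[ℂ] H)}

theorem map_star_mul_self_nonneg (hφ : IsCompletelyPositive φ) (a : A) :
    0 ≤ φ (star a * a) := by
  rw [ContinuousLinearMap.nonneg_iff_isPositive, ContinuousLinearMap.isPositive_iff_complex]
  intro ξ
  have h : 0 ≤ ⟪ξ, φ (star a * a) ξ⟫_ℂ := by simpa using hφ 1 ![a] ![ξ]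
  have h' : 0 ≤ ⟪φ (star a * a) ξ, ξ⟫_ℂ := by
    rw [← inner_conj_symm]
    exact star_nonneg_iff.mpr h
  exact ⟨(Complex.eq_re_of_ofReal_le (r := 0) (by rwa [Complex.ofReal_zero])).symm,
    (Complex.nonneg_iff.mp h').1⟩

variable [CompleteSpace H]

theorem isSelfAdjoint_map (hφ : IsCompletelyPositive φ) {h : A} (hh : IsSelfAdjoint h) :
    IsSelfAdjoint (φ h) := by
  have polarization : h = (4⁻¹ : ℂ) • (star (1 + h) * (1 + h) - star (1 - h) * (1 - h)) := by
    have : star (1 + h) * (1 + h) - star (1 - h) * (1 - h) = (4 : ℕ) • h := by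
      rw [star_add, star_sub, star_one, hh.star_eq]
      simp only [add_mul, mul_add, sub_mul, mul_sub, one_mul, mul_one]
      abel
    rw [this, ← Nat.cast_smul_eq_nsmul ℂ, smul_smul, Nat.cast_ofNat,
      inv_mul_cancel₀ four_ne_zero, one_smul]
  have hpos (a : A) : IsSelfAdjoint (φ (star a * a)) :=
    IsSelfAdjoint.of_nonneg (hφ.map_star_mul_self_nonneg a)
  rw [polarization, map_smul, map_sub]
  exact (IsSelfAdjoint.ofNat 4 |>.inv₀).smul ((hpos _).sub (hpos _))

variable [StarModule ℂ A]

theorem map_star (hφ : IsCompletelyPositive φ) (a : A) :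
    φ (star a) = star (φ a) := by
  have hre := (ℜ a).2
  have him := (ℑ a).2
  have hφre := hφ.isSelfAdjoint_map hre
  have hφim := hφ.isSelfAdjoint_map him
  rw [← realPart_add_I_smul_imaginaryPart a]
  simp only [star_add, star_smul, map_add, map_smul, hre.star_eq, him.star_eq, hφre.star_eq,
    hφim.star_eq]

theorem inner_map_add_map_le (hφ : IsCompletelyPositive φ) (hunital : φ 1 = 1)
    (a b : A) (ξ η : H) :
    ⟪φ a ξ + φ b η, φ a ξ + φ b η⟫_ℂ ≤
      ⟪ξ, φ (star a * a) ξ⟫_ℂ + ⟪ξ, φ (star a * b) η⟫_ℂ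
        + ⟪η, φ (star b * a) ξ⟫_ℂ + ⟪η, φ (star b * b) η⟫_ℂ := by
  rw [← sub_nonneg]
  convert hφ 3 ![1, a, b] ![-(φ a ξ + φ b η), ξ, η] using 1
  simp only [Fin.sum_univ_three, Matrix.cons_val_zero, Matrix.cons_val_one, Matrix.cons_val_two,
    Matrix.head_cons, Matrix.tail_cons, star_one, one_mul, mul_one, hunital,
    one_apply_eq_self, hφ.map_star, ContinuousLinearMap.star_eq_adjoint,
    ContinuousLinearMap.adjoint_inner_right, inner_add_left, inner_add_right, inner_neg_left,
    inner_neg_right]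
  ring

theorem map_star_mul_of_map_star_mul_self (hφ : IsCompletelyPositive φ) (hunital : φ 1 = 1)
    {a : A} (ha : φ (star a * a) = star (φ a) * φ a) (b : A) :
    φ (star a * b) = star (φ a) * φ b := by
  rw [← sub_eq_zero]
  ext η
  set v := (φ (star a * b) - star (φ a) * φ b) η with hv
  have hquad (t : ℝ) : 0 ≤ t * (2 * ‖v‖ ^ 2)
      + (⟪η, φ (star b * b) η⟫_ℂ - ⟪φ b η, φ b η⟫_ℂ).re := by
    set ξ := (t : ℂ) • v
    have hξa : ⟪ξ, φ (star a * a) ξ⟫_ℂ = ⟪φ a ξ, φ a ξ⟫_ℂ := by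
      rw [ha, mul_apply_eq_comp, ContinuousLinearMap.star_eq_adjoint,
        ContinuousLinearMap.adjoint_inner_right]
    have hξb : ⟪ξ, φ (star a * b) η⟫_ℂ = ((t * ‖v‖ ^ 2 : ℝ) : ℂ) + ⟪φ a ξ, φ b η⟫_ℂ := by
      rw [← sub_add_cancel (φ (star a * b) η) ((star (φ a) * φ b) η),
        ← sub_apply, ← hv, inner_add_right, mul_apply_eq_comp,
        ContinuousLinearMap.star_eq_adjoint, ContinuousLinearMap.adjoint_inner_right,
        inner_smul_left, Complex.conj_ofReal, inner_self_eq_norm_sq_to_K]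
      push_cast
      rfl
    have hηa : ⟪η, φ (star b * a) ξ⟫_ℂ = conj ⟪ξ, φ (star a * b) η⟫_ℂ := by
      rw [← star_star b, ← star_mul, hφ.map_star, ContinuousLinearMap.star_eq_adjoint,
        ContinuousLinearMap.adjoint_inner_right, inner_conj_symm, star_star]
    have := Complex.le_def.1 (hφ.inner_map_add_map_le hunital a b ξ η) |>.1
    rw [hξa, hηa, hξb] at this
    have hsymm : (⟪φ b η, φ a ξ⟫_ℂ).re = (⟪φ a ξ, φ b η⟫_ℂ).re := by
      rw [← inner_conj_symm, Complex.conj_re]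
    simp only [inner_add_left, inner_add_right, Complex.add_re, map_add, Complex.conj_re,
      Complex.ofReal_re, Complex.sub_re] at this ⊢
    linarith
  have hv0 : 2 * ‖v‖ ^ 2 = 0 := eq_zero_of_forall_nonneg_mul_add hquad
  simpa [hv] using hv0

end IsCompletelyPositive
end CompletelyPositive

section MultiplicativeDomain

variable {A : Type*} [CStarAlgebra A]
  {H : Type*} [NormedAddCommGroup H] [InnerProductSpace ℂ H] [CompleteSpace H]
  {φ : A →ₗ[ℂ] (H →L[ℂ] H)}

theorem mem_multiplicativeDomain_iff (hφ : IsCompletelyPositive φ) (hunital : φ 1 = 1) {x : A} :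
    x ∈ multiplicativeDomain φ ↔ ∀ b, φ (x * b) = φ x * φ b ∧ φ (b * x) = φ b * φ x := by
  constructor
  · rintro ⟨hleft, hright⟩ b
    have hright' : φ (star (star x) * star x) = star (φ (star x)) * φ (star x) := by
      simpa only [star_star, hφ.map_star] using hright
    constructor
    · simpa only [star_star, hφ.map_star] using
        hφ.map_star_mul_of_map_star_mul_self hunital hright' b
    · rw [← star_star (b * x), hφ.map_star, star_mul,
        hφ.map_star_mul_of_map_star_mul_self hunital hleft, star_mul, star_star, hφ.map_star,
        star_star]
  · intro h
    exact ⟨by rw [(h (star x)).2, hφ.map_star], by rw [(h (star x)).1, hφ.map_star]⟩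

theorem star_mem_multiplicativeDomain (hφ : IsCompletelyPositive φ) {x : A}
    (hx : x ∈ multiplicativeDomain φ) : star x ∈ multiplicativeDomain φ := by
  simpa only [multiplicativeDomain, Set.mem_ofPred_eq, star_star, hφ.map_star] using hx.symm

end MultiplicativeDomain

/-- Choi's multiplicative domain theorem: for a unital completely positive map
`φ : A → B(H)` on a unital C*-algebra, the multiplicative domain `md(φ)` is a unital
*-subalgebra of `A`, and `φ` restricted to it is multiplicative. -/
theorem choi_multiplicative_domain
    {A : Type*} [CStarAlgebra A]
    {H : Type*} [NormedAddCommGroup H] [InnerProductSpace ℂ H] [CompleteSpace H]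
    (φ : A →ₗ[ℂ] (H →L[ℂ] H)) (hunital : φ 1 = 1)
    (hcp : ∀ (n : ℕ) (x : Fin n → A) (ξ : Fin n → H),
        0 ≤ ∑ i, ∑ j, (inner ℂ (ξ i) (φ (star (x i) * x j) (ξ j)) : ℂ)) :
    (1 : A) ∈ multiplicativeDomain φ ∧
    (∀ x ∈ multiplicativeDomain φ, ∀ y ∈ multiplicativeDomain φ,
        x + y ∈ multiplicativeDomain φ) ∧
    (∀ (c : ℂ), ∀ x ∈ multiplicativeDomain φ, c • x ∈ multiplicativeDomain φ) ∧
    (∀ x ∈ multiplicativeDomain φ, ∀ y ∈ multiplicativeDomain φ,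
        x * y ∈ multiplicativeDomain φ) ∧
    (∀ x ∈ multiplicativeDomain φ, star x ∈ multiplicativeDomain φ) ∧
    (∀ x ∈ multiplicativeDomain φ, ∀ y ∈ multiplicativeDomain φ,
        φ (x * y) = φ x * φ y) := by
  have hφ : IsCompletelyPositive φ := hcp
  refine ⟨?one, ?add, ?smul, ?mul, fun x hx => star_mem_multiplicativeDomain hφ hx, ?mult⟩ <;>
    simp only [mem_multiplicativeDomain_iff hφ hunital]
  case one => exact fun b => by simp [hunital]
  case add =>
    intro x hx y hy b
    simp only [add_mul, mul_add, map_add, (hx b).1, (hy b).1, (hx b).2, (hy b).2, and_self]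
  case smul =>
    intro c x hx b
    simp only [smul_mul_assoc, mul_smul_comm, map_smul, (hx b).1, (hx b).2, and_self]
  case mul =>
    intro x hx y hy b
    constructor
    · rw [mul_assoc, (hx _).1, (hy b).1, (hx y).1, mul_assoc]
    · rw [← mul_assoc, (hy _).2, (hx b).2, (hx y).1, mul_assoc]
  case mult => exact fun x hx y _ => (hx y).1
end

section
/- Let d ∈ ℕ, let F_d be the free group on d generators, let g ∈ ℂ[F_d] be hermitian, and let E ⊆ F_d be a finite grounded subset. If the matrix [g(s⁻¹t)]_{s,t∈E} ∈ M_E(ℂ) is positive semidefinite, then there exists a function g′ : F_d → ℂ of positive type such that g′(a) = g(a) for all a ∈ E⁻¹E := {s⁻¹t : s, t ∈ E}. -/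
open scoped ComplexOrder

/-- The canonical involution on the complex group algebra `ℂ[Γ]`:
`f*(s) = conj (f s⁻¹)`. -/
noncomputable def groupAlgebraStar {Γ : Type*} [Group Γ]
    (f : MonoidAlgebra ℂ Γ) : MonoidAlgebra ℂ Γ :=
  MonoidAlgebra.ofCoeff (Finsupp.mapDomain (fun s : Γ => s⁻¹)
    (Finsupp.mapRange (starRingEnd ℂ) (map_zero _) f.coeff))

/-- A subset `E` of the free group `F_d` is grounded if it contains the identity and
is closed under taking right segments: whenever `t ∈ E` and `t = t′ * t″` without
cancellation (the reduced word lengths add up), the right factor `t″` lies in `E`. -/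
def Grounded {d : ℕ} (E : Set (FreeGroup (Fin d))) : Prop :=
  (1 : FreeGroup (Fin d)) ∈ E ∧
    ∀ t ∈ E, ∀ t' t'' : FreeGroup (Fin d), t = t' * t'' →
      t.toWord.length = t'.toWord.length + t''.toWord.length → t'' ∈ E

/-- A function `u : F_d → ℂ` is of positive type if
`Σ_{s,t} conj (h s) * h t * u (s⁻¹ t) ≥ 0` for every finitely supported `h`. -/
def IsPositiveType {d : ℕ} (u : FreeGroup (Fin d) → ℂ) : Prop :=
  ∀ h : FreeGroup (Fin d) →₀ ℂ,
    0 ≤ ∑ s ∈ h.support, ∑ t ∈ h.support,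
      starRingEnd ℂ (h s) * h t * u (s⁻¹ * t)

/-! Being positive semidefinite, `[g(s⁻¹t)]_{s,t ∈ E}` is the Gram matrix of vectors `v s`
(`s ∈ E`) in a finite-dimensional Hilbert space. For each generator `i`, the correspondence
`v s ↦ v (i s)` (where `s` and `i s` lie in `E`) preserves inner products, so it extends to a
unitary `U i`; by freeness the `U i` define a unitary representation `π` of `F_d`. Since `E` is
grounded, every `s ∈ E` is reached from `1` by adding letters on the left without leaving `E`,
whence `π s (v 1) = v s`. The function `a ↦ ⟪v 1, π a (v 1)⟫` is of positive type and takes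
the value `⟪v s, v t⟫ = g(s⁻¹t)` at `s⁻¹t`. -/

open scoped InnerProductSpace

theorem Matrix.PosSemidef.exists_eq_gram {𝕜 n : Type*} [RCLike 𝕜] [Fintype n]
    {M : Matrix n n 𝕜} (hM : M.PosSemidef) :
    ∃ v : n → EuclideanSpace 𝕜 n, M = gram 𝕜 v := by
  classical
  open scoped MatrixOrder in
  obtain ⟨B, rfl⟩ := CStarAlgebra.nonneg_iff_eq_star_mul_self.mp hM.nonneg
  refine ⟨fun j ↦ WithLp.toLp 2 fun i ↦ B i j, ?_⟩
  rw [gram_eq_conjTranspose_mul (EuclideanSpace.basisFun n 𝕜)]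
  rfl

theorem LinearMap.exists_linearIsometry_range_comp_eq {R M E F : Type*} [Ring R]
    [AddCommGroup M] [Module R M] [NormedAddCommGroup E] [Module R E]
    [NormedAddCommGroup F] [Module R F] (φ : M →ₗ[R] E) (ψ : M →ₗ[R] F)
    (h : ∀ c, ‖ψ c‖ = ‖φ c‖) :
    ∃ L : range φ →ₗᵢ[R] F, ∀ c, L (φ.rangeRestrict c) = ψ c := by
  have hker : ker φ ≤ ker ψ := fun c hc ↦ by
    rw [mem_ker, ← norm_eq_zero, h, norm_eq_zero, ← mem_ker]
    exact hc
  let T : range φ →ₗ[R] F := (ker φ).liftQ ψ hker ∘ₗ φ.quotKerEquivRange.symm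
  have hT : ∀ c, T (φ.rangeRestrict c) = ψ c := fun c ↦ by
    have : φ.quotKerEquivRange (Submodule.Quotient.mk c) = φ.rangeRestrict c :=
      Subtype.ext (φ.quotKerEquivRange_apply_mk c)
    simp [T, ← this]
  refine ⟨⟨T, fun w ↦ ?_⟩, hT⟩
  obtain ⟨c, rfl⟩ := φ.surjective_rangeRestrict w
  rw [hT, h]
  rfl

theorem exists_linearIsometryEquiv_of_inner_eq {𝕜 E ι : Type*} [RCLike 𝕜]
    [NormedAddCommGroup E] [InnerProductSpace 𝕜 E] [FiniteDimensional 𝕜 E]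
    (x y : ι → E) (h : ∀ i j, ⟪x i, x j⟫_𝕜 = ⟪y i, y j⟫_𝕜) :
    ∃ U : E ≃ₗᵢ[𝕜] E, ∀ i, U (x i) = y i := by
  let φ := Finsupp.linearCombination 𝕜 x
  let ψ := Finsupp.linearCombination 𝕜 y
  have hinner : ∀ c, ⟪ψ c, ψ c⟫_𝕜 = ⟪φ c, φ c⟫_𝕜 := fun c ↦ by
    simp only [φ, ψ, Finsupp.linearCombination_apply, Finsupp.sum, sum_inner, inner_sum,
      inner_smul_left, inner_smul_right, h]
  obtain ⟨L, hL⟩ := φ.exists_linearIsometry_range_comp_eq ψ fun c ↦ by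
    rw [@norm_eq_sqrt_re_inner 𝕜, @norm_eq_sqrt_re_inner 𝕜, hinner]
  refine ⟨L.extend.toLinearIsometryEquiv rfl, fun i ↦ ?_⟩
  have hφ : φ (Finsupp.single i 1) = x i := by simp [φ]
  have hψ : ψ (Finsupp.single i 1) = y i := by simp [ψ]
  rw [LinearIsometry.coe_toLinearIsometryEquiv, ← hφ, ← hψ, ← hL]
  exact L.extend_apply (φ.rangeRestrict _)

instance LinearIsometryEquiv.applyMulAction {R E : Type*} [Semiring R]
    [SeminormedAddCommGroup E] [Module R E] : MulAction (E ≃ₗᵢ[R] E) E where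
  smul := (· ·)
  one_smul _ := rfl
  mul_smul _ _ _ := rfl

theorem inner_smul_inv_mul_smul {𝕜 E G : Type*} [RCLike 𝕜] [NormedAddCommGroup E]
    [InnerProductSpace 𝕜 E] [Group G] (π : G →* (E ≃ₗᵢ[𝕜] E)) (ξ : E) (s t : G) :
    ⟪ξ, π (s⁻¹ * t) • ξ⟫_𝕜 = ⟪π s • ξ, π t • ξ⟫_𝕜 := by
  rw [map_mul, map_inv, mul_smul, ← LinearIsometryEquiv.inner_map_map (π s)]
  exact congrArg _ (smul_inv_smul (π s) _)

theorem isPositiveType_inner_smul {d : ℕ} {H : Type*} [NormedAddCommGroup H]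
    [InnerProductSpace ℂ H] (π : FreeGroup (Fin d) →* (H ≃ₗᵢ[ℂ] H)) (ξ : H) :
    IsPositiveType fun a ↦ ⟪ξ, π a • ξ⟫_ℂ := by
  intro h
  set w := ∑ t ∈ h.support, h t • π t • ξ
  have hw : ∑ s ∈ h.support, ∑ t ∈ h.support,
      starRingEnd ℂ (h s) * h t * ⟪ξ, π (s⁻¹ * t) • ξ⟫_ℂ = ⟪w, w⟫_ℂ := by
    rw [sum_inner]
    refine Finset.sum_congr rfl fun s _ ↦ ?_
    rw [inner_smul_left, inner_sum, Finset.mul_sum]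
    refine Finset.sum_congr rfl fun t _ ↦ ?_
    rw [inner_smul_right, inner_smul_inv_mul_smul, mul_assoc]
  rw [hw]
  exact RCLike.nonneg_iff.mpr ⟨inner_self_nonneg, inner_self_im w⟩

namespace FreeGroup

variable {α : Type*}

theorem mk_singleton_false (a : α) : mk [(a, false)] = (of a)⁻¹ := rfl

theorem eq_mk_mul_mk_of_toWord_eq_cons [DecidableEq α] {x : FreeGroup α} {p : α × Bool}
    {L : List (α × Bool)} (h : x.toWord = p :: L) : x = mk [p] * mk L ∧ (mk L).toWord = L := by
  refine ⟨by rw [mul_mk, List.singleton_append, ← h, mk_toWord], ?_⟩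
  have hred : IsReduced (p :: L) := h ▸ isReduced_toWord
  rw [toWord_mk, (hred.infix (List.suffix_cons p L).isInfix).reduce_eq]

end FreeGroup

namespace Grounded

open FreeGroup (of mk)

variable {d : ℕ} {E : Set (FreeGroup (Fin d))}

theorem mk_mem_of_toWord_eq_cons (hE : Grounded E) {s : FreeGroup (Fin d)} (hs : s ∈ E)
    {p : Fin d × Bool} {L : List (Fin d × Bool)} (h : s.toWord = p :: L) : mk L ∈ E := by
  obtain ⟨hsL, hL⟩ := FreeGroup.eq_mk_mul_mk_of_toWord_eq_cons h
  refine hE.2 s hs _ _ hsL ?_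
  rw [h, hL, FreeGroup.toWord_mk, FreeGroup.reduce_singleton, List.length_cons,
    List.length_singleton, add_comm]

theorem smul_one_eq (hE : Grounded E) {G X : Type*} [Group G] [MulAction G X]
    (π : FreeGroup (Fin d) →* G) (v : FreeGroup (Fin d) → X)
    (hv : ∀ i s, s ∈ E → of i * s ∈ E → π (of i) • v s = v (of i * s))
    {s : FreeGroup (Fin d)} (hs : s ∈ E) : π s • v 1 = v s := by
  induction h : s.toWord generalizing s with
  | nil => rw [FreeGroup.toWord_eq_nil_iff.mp h, map_one, one_smul]
  | cons p L ih =>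
    have hLE := hE.mk_mem_of_toWord_eq_cons hs h
    obtain ⟨hsL, hL⟩ := FreeGroup.eq_mk_mul_mk_of_toWord_eq_cons h
    have ihL := ih hLE hL
    obtain ⟨i, _ | _⟩ := p
    · have hi : of i * s = mk L := by
        rw [hsL, FreeGroup.mk_singleton_false, mul_inv_cancel_left]
      refine (smul_left_cancel_iff (π (of i))).mp ?_
      rw [← mul_smul, ← map_mul, hi, ihL, hv i s hs (hi ▸ hLE), hi]
    · rw [hsL] at hs ⊢
      rw [map_mul, mul_smul, ihL]
      exact hv i _ hLE hs

end Grounded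

theorem grounded_positive_extension_general
    {d : ℕ} (g : MonoidAlgebra ℂ (FreeGroup (Fin d)))
    (E : Finset (FreeGroup (Fin d))) (hE : Grounded (E : Set (FreeGroup (Fin d))))
    (hpos : (Matrix.of fun s t : E =>
        g.coeff ((s : FreeGroup (Fin d))⁻¹ * (t : FreeGroup (Fin d)))).PosSemidef) :
    ∃ g' : FreeGroup (Fin d) → ℂ, IsPositiveType g' ∧
      ∀ a : FreeGroup (Fin d), (∃ s ∈ E, ∃ t ∈ E, a = s⁻¹ * t) → g' a = g.coeff a := by
  classical
  obtain ⟨w, hw⟩ := hpos.exists_eq_gram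
  let v : FreeGroup (Fin d) → EuclideanSpace ℂ E := fun s ↦
    if hs : s ∈ E then w ⟨s, hs⟩ else 0
  have hv : ∀ s ∈ E, ∀ t ∈ E, ⟪v s, v t⟫_ℂ = g.coeff (s⁻¹ * t) := fun s hs t ht ↦ by
    simpa [v, hs, ht] using (congrFun₂ hw ⟨s, hs⟩ ⟨t, ht⟩).symm
  have hU : ∀ i, ∃ U : EuclideanSpace ℂ E ≃ₗᵢ[ℂ] EuclideanSpace ℂ E, ∀ s ∈ E,
      FreeGroup.of i * s ∈ E → U (v s) = v (FreeGroup.of i * s) := fun i ↦ by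
    let ι := {s // s ∈ E ∧ FreeGroup.of i * s ∈ E}
    obtain ⟨U, hU⟩ := exists_linearIsometryEquiv_of_inner_eq (fun s : ι ↦ v s)
      (fun s ↦ v (FreeGroup.of i * s)) fun s t ↦ by
        rw [hv _ s.2.1 _ t.2.1, hv _ s.2.2 _ t.2.2, mul_inv_rev, mul_assoc,
          inv_mul_cancel_left]
    exact ⟨U, fun s hs his ↦ hU ⟨s, hs, his⟩⟩
  choose U hU using hU
  let π := FreeGroup.lift U
  have hπ : ∀ s ∈ E, π s • v 1 = v s := fun s hs ↦ hE.smul_one_eq π v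
    (fun i s hs his ↦ by rw [FreeGroup.lift_apply_of]; exact hU i s hs his) hs
  refine ⟨fun a ↦ ⟪v 1, π a • v 1⟫_ℂ, isPositiveType_inner_smul π (v 1), ?_⟩
  rintro a ⟨s, hs, t, ht, rfl⟩
  dsimp only
  rw [inner_smul_inv_mul_smul, hπ s hs, hπ t ht, hv s hs t ht]

/-- Extension lemma (Bakonyi–Timotin): if `g ∈ ℂ[F_d]` is hermitian, `E` is a finite
grounded subset of `F_d`, and the matrix `[g(s⁻¹t)]_{s,t∈E}` is positive
semidefinite, then there is a positive type function `g′ : F_d → ℂ` agreeing with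
`g` on `E⁻¹E`. -/
theorem grounded_positive_extension
    {d : ℕ} (g : MonoidAlgebra ℂ (FreeGroup (Fin d)))
    (hg : groupAlgebraStar g = g)
    (E : Finset (FreeGroup (Fin d))) (hE : Grounded (E : Set (FreeGroup (Fin d))))
    (hpos : (Matrix.of fun s t : E =>
        g.coeff ((s : FreeGroup (Fin d))⁻¹ * (t : FreeGroup (Fin d)))).PosSemidef) :
    ∃ g' : FreeGroup (Fin d) → ℂ, IsPositiveType g' ∧
      ∀ a : FreeGroup (Fin d), (∃ s ∈ E, ∃ t ∈ E, a = s⁻¹ * t) → g' a = g.coeff a :=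
  grounded_positive_extension_general g E hE hpos
end
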